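/- Let G be a finite group and let h ∈ G with h ≠ 1. Let P_h be the G-poset on two disjoint copies G⁽¹⁾, G⁽²⁾ of G, with action g•x⁽ⁱ⁾ = (gx)⁽ⁱ⁾ and the partial order whose only strict relations are g⁽¹⁾ < g⁽²⁾ and g⁽¹⁾ < (gh)⁽²⁾ for all g ∈ G. If two elements x⁽ⁱ⁾ and y⁽ʲ⁾ of P_h are joined by a path in the comparability graph of P_h, then their group coordinates lie in the same left coset of the cyclic subgroup ⟨h⟩, i.e., x⁻¹ y ∈ ⟨h⟩. -/

import Mathlib

/-- The comparability graph of a poset: distinct `u, v` are adjacent iff they are comparable. -/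
def compGraph (P : Type*) [PartialOrder P] : SimpleGraph P where
  Adj u v := u ≠ v ∧ (u ≤ v ∨ v ≤ u)
  symm := ⟨fun _ _ h => ⟨h.1.symm, h.2.symm⟩⟩
  loopless := ⟨fun _ h => h.1 rfl⟩

/-- The ground set of the `G`-poset `P_h`: two copies of `G`, the copy of `g` in the first
(resp. second) copy being `(g, false)` (resp. `(g, true)`). -/
def Ph (G : Type*) (h : G) : Type _ := G × Bool

/-- The order on `P_h`: the only strict relations are `g⁽¹⁾ < g⁽²⁾` and `g⁽¹⁾ < (g h)⁽²⁾`. -/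
instance Ph.instPartialOrder (G : Type*) [Group G] (h : G) : PartialOrder (Ph G h) where
  le x y := x = y ∨ (x.2 = false ∧ y.2 = true ∧ (y.1 = x.1 ∨ y.1 = x.1 * h))
  le_refl x := Or.inl rfl
  le_trans := by
    rintro x y z (rfl | ⟨hx, hy, hr⟩) hyz
    · exact hyz
    · rcases hyz with rfl | ⟨hy', _, _⟩
      · exact Or.inr ⟨hx, hy, hr⟩
      · rw [hy] at hy'; simp at hy'
  le_antisymm := by
    rintro x y (rfl | ⟨hx, hy, _⟩) hyx
    · rfl
    · rcases hyx with h' | ⟨hy', _, _⟩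
      · exact h'.symm
      · rw [hy] at hy'; simp at hy'

/-- The `G`-action on `P_h`: `g • x⁽ⁱ⁾ = (g x)⁽ⁱ⁾`. -/
instance Ph.instSMul (G : Type*) [Group G] (h : G) : SMul G (Ph G h) :=
  ⟨fun g x => (g * x.1, x.2)⟩

instance Ph.instMulAction (G : Type*) [Group G] (h : G) : MulAction G (Ph G h) where
  one_smul x := by
    show ((1 : G) * x.1, x.2) = x
    simp
    rfl
  mul_smul g₁ g₂ x := by
    show (g₁ * g₂ * x.1, x.2) = (g₁ * (g₂ * x.1), x.2)
    rw [mul_assoc]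

theorem compGraph_reachable_apply_eq {P α : Type*} [PartialOrder P] {f : P → α}
    (hf : ∀ x y, x ≤ y → f x = f y) {u v : P} (huv : (compGraph P).Reachable u v) :
    f u = f v := by
  rw [SimpleGraph.reachable_iff_reflTransGen] at huv
  induction huv with
  | refl => rfl
  | tail _ hadj ih => exact ih.trans (hadj.2.elim (hf _ _) fun hle => (hf _ _ hle).symm)

theorem Ph.mk_zpowers_eq_of_le {G : Type*} [Group G] {h : G} {x y : Ph G h} (hxy : x ≤ y) :
    (x.1 : G ⧸ Subgroup.zpowers h) = y.1 := by
  rcases hxy with rfl | ⟨-, -, hy | hy⟩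
  · rfl
  · rw [hy]
  · rw [hy, QuotientGroup.eq, inv_mul_cancel_left]
    exact Subgroup.mem_zpowers h

theorem stmt5_general {G : Type*} [Group G] (h : G)
    (u v : Ph G h) (huv : (compGraph (Ph G h)).Reachable u v) :
    u.1⁻¹ * v.1 ∈ Subgroup.zpowers h :=
  QuotientGroup.eq.mp <| compGraph_reachable_apply_eq (fun _ _ => Ph.mk_zpowers_eq_of_le) huv

/-- If two elements of `P_h` are joined by a path in the comparability graph of `P_h`, then
their group coordinates lie in the same left coset of `⟨h⟩`, i.e. `x⁻¹ y ∈ ⟨h⟩`. -/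
theorem stmt5 {G : Type*} [Group G] [Finite G] (h : G) (hh : h ≠ 1)
    (u v : Ph G h) (huv : (compGraph (Ph G h)).Reachable u v) :
    u.1⁻¹ * v.1 ∈ Subgroup.zpowers h :=
  stmt5_general h u v huv
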